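/- arXiv:1805.05448 — 6 statements merged into one kernel-verified Lean document; each statement's English description precedes it below -/
import Mathlib

section
/- Let P be a finite set of points in the plane, each assigned one of 2k colors, such that every color is used by at least one point. Among all perfect matchings on color-spanning subsets (subsets of 2k points, one of each color), let M be one minimizing the total Euclidean edge length. Then for every edge (p,q) of M, the distance |pq| equals the minimum Euclidean distance between any point of color(p) and any point of color(q) in P. -/
/-! Exchange argument: replacing the `i`-th edge of a matching by any pair `(p, q)` with the same
two colors yields another color-spanning matching, whose weight differs from the old one exactly
by `dist p q - dist (M.e i).1 (M.e i).2`. Optimality of `M` forces this difference to be `≥ 0`. -/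

open scoped Classical

noncomputable section

abbrev Pt := EuclideanSpace ℝ (Fin 2)

/-- A color-spanning matching of a `2*k`-colored point set `P`: `k` edges whose
`2*k` endpoints lie in `P` and have pairwise distinct colors (hence the
endpoints are pairwise distinct and all `2*k` colors are used). -/
structure CSM (k : ℕ) (P : Finset Pt) (color : Pt → Fin (2*k)) where
  e : Fin k → Pt × Pt
  mem1 : ∀ i, (e i).1 ∈ P
  mem2 : ∀ i, (e i).2 ∈ P
  colorInj : Function.Injective
    (fun x : Fin k × Bool => color (if x.2 then (e x.1).1 else (e x.1).2))

def CSM.weight {k : ℕ} {P : Finset Pt} {color : Pt → Fin (2*k)}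
    (M : CSM k P color) : ℝ :=
  ∑ i, dist (M.e i).1 (M.e i).2

def CSM.minEdge {k : ℕ} (hk : 0 < k) {P : Finset Pt} {color : Pt → Fin (2*k)}
    (M : CSM k P color) : ℝ :=
  Finset.univ.inf' ⟨⟨0, hk⟩, Finset.mem_univ _⟩ fun i => dist (M.e i).1 (M.e i).2

def CSM.maxEdge {k : ℕ} (hk : 0 < k) {P : Finset Pt} {color : Pt → Fin (2*k)}
    (M : CSM k P color) : ℝ :=
  Finset.univ.sup' ⟨⟨0, hk⟩, Finset.mem_univ _⟩ fun i => dist (M.e i).1 (M.e i).2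

namespace CSM

variable {k : ℕ} {P : Finset Pt} {color : Pt → Fin (2*k)}

def replaceEdge (M : CSM k P color) (i : Fin k) {p q : Pt} (hp : p ∈ P) (hq : q ∈ P)
    (hcp : color p = color (M.e i).1) (hcq : color q = color (M.e i).2) : CSM k P color where
  e := Function.update M.e i (p, q)
  mem1 j := by
    rcases eq_or_ne j i with rfl | hj
    · simpa using hp
    · simpa [hj] using M.mem1 j
  mem2 j := by
    rcases eq_or_ne j i with rfl | hj
    · simpa using hq
    · simpa [hj] using M.mem2 j
  colorInj := by
    convert M.colorInj using 2 with ⟨j, b⟩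
    rcases eq_or_ne j i with rfl | hj
    · cases b <;> simp [hcp, hcq]
    · simp [hj]

theorem weight_replaceEdge (M : CSM k P color) (i : Fin k) {p q : Pt} (hp : p ∈ P) (hq : q ∈ P)
    (hcp : color p = color (M.e i).1) (hcq : color q = color (M.e i).2) :
    (M.replaceEdge i hp hq hcp hcq).weight + dist (M.e i).1 (M.e i).2 = M.weight + dist p q := by
  have hupdate : (fun j => dist (Function.update M.e i (p, q) j).1
      (Function.update M.e i (p, q) j).2) =
      Function.update (fun j => dist (M.e j).1 (M.e j).2) i (dist p q) :=
    funext (Function.apply_update (fun _ e => dist e.1 e.2) M.e i (p, q))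
  simp only [weight, replaceEdge]
  rw [hupdate, Finset.sum_update_of_mem (Finset.mem_univ i),
    Finset.sum_eq_add_sum_sdiff_singleton_of_mem (Finset.mem_univ i)
      (fun j => dist (M.e j).1 (M.e j).2)]
  ring

end CSM

theorem minsum_edge_is_bichromatic_closest_pair_general
    (k : ℕ) (P : Finset Pt) (color : Pt → Fin (2*k))
    (M : CSM k P color)
    (hopt : ∀ M' : CSM k P color, M.weight ≤ M'.weight) :
    ∀ i : Fin k, ∀ p ∈ P, ∀ q ∈ P,
      color p = color (M.e i).1 → color q = color (M.e i).2 →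
      dist (M.e i).1 (M.e i).2 ≤ dist p q := by
  intro i p hp q hq hcp hcq
  have hle := hopt (M.replaceEdge i hp hq hcp hcq)
  have hweight := M.weight_replaceEdge i hp hq hcp hcq
  linarith

/-- In a MinSum-optimal color-spanning matching, every matched edge realizes the
bichromatic closest-pair distance between its two endpoint colors. -/
theorem minsum_edge_is_bichromatic_closest_pair
    (k : ℕ) (P : Finset Pt) (color : Pt → Fin (2*k))
    (hsurj : ∀ c : Fin (2*k), ∃ p ∈ P, color p = c)
    (M : CSM k P color)
    (hopt : ∀ M' : CSM k P color, M.weight ≤ M'.weight) :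
    ∀ i : Fin k, ∀ p ∈ P, ∀ q ∈ P,
      color p = color (M.e i).1 → color q = color (M.e i).2 →
      dist (M.e i).1 (M.e i).2 ≤ dist p q :=
  minsum_edge_is_bichromatic_closest_pair_general k P color M hopt

end
end

section
/- Let P be a finite set of points in the plane, each assigned one of 2k colors, with every color used. Among all color-spanning matchings, let M be one maximizing the minimum edge length. Then there exists an optimal matching M such that its minimum-length edge (p,q) satisfies: |pq| equals the maximum Euclidean distance between any point of color(p) and any point of color(q) in P. -/
open scoped Classical

noncomputable section

/-! Take any MaxMin-optimal matching and replace each of its edges by a farthest pair of points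
with the same two colors. No edge gets shorter, so the matching stays optimal, and now every
edge, in particular a shortest one, is a bichromatic farthest pair. -/

def IsFarthestPairOfColors {α γ : Type*} [PseudoMetricSpace α] (P : Finset α) (color : α → γ)
    (p q : α) : Prop :=
  ∀ p' ∈ P, ∀ q' ∈ P, color p' = color p → color q' = color q → dist p' q' ≤ dist p q

theorem exists_isFarthestPairOfColors {α γ : Type*} [PseudoMetricSpace α] {P : Finset α}
    (color : α → γ) {a b : α} (ha : a ∈ P) (hb : b ∈ P) :
    ∃ p ∈ P, ∃ q ∈ P, color p = color a ∧ color q = color b ∧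
      IsFarthestPairOfColors P color p q := by
  let S := (P ×ˢ P).filter fun x => color x.1 = color a ∧ color x.2 = color b
  obtain ⟨⟨p, q⟩, hpq, hmax⟩ :=
    S.exists_max_image (fun x => dist x.1 x.2) ⟨(a, b), by simp [S, ha, hb]⟩
  simp only [S, Finset.mem_filter, Finset.mem_product] at hpq hmax
  obtain ⟨⟨hp, hq⟩, hpa, hqb⟩ := hpq
  refine ⟨p, hp, q, hq, hpa, hqb, fun p' hp' q' hq' hp'p hq'q => ?_⟩
  exact hmax (p', q') ⟨⟨hp', hq'⟩, hp'p.trans hpa, hq'q.trans hqb⟩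

namespace CSM

variable {k : ℕ} {P : Finset Pt} {color : Pt → Fin (2*k)}

theorem e_injective : Function.Injective (CSM.e : CSM k P color → Fin k → Pt × Pt) := by
  rintro ⟨e, _, _, _⟩ ⟨e', _, _, _⟩ rfl
  rfl

instance : Finite (CSM k P color) :=
  Finite.of_injective (fun M i => ((⟨(M.e i).1, M.mem1 i⟩ : P), (⟨(M.e i).2, M.mem2 i⟩ : P)))
    fun _ _ h => e_injective <| funext fun i =>
      Prod.ext (congrArg (Subtype.val ∘ Prod.fst) (congrFun h i))
        (congrArg (Subtype.val ∘ Prod.snd) (congrFun h i))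

/-- Pair the colors along a bijection `Fin k × Bool ≃ Fin (2*k)` and pick a point of each. -/
theorem nonempty_of_forall_exists_color (hsurj : ∀ c : Fin (2*k), ∃ p ∈ P, color p = c) :
    Nonempty (CSM k P color) := by
  choose rep hrepP hrepc using hsurj
  let σ : Fin k × Bool ≃ Fin (2*k) := Fintype.equivFinOfCardEq (by simp [mul_comm])
  refine ⟨⟨fun i => (rep (σ (i, true)), rep (σ (i, false))), fun _ => hrepP _, fun _ => hrepP _,
    ?_⟩⟩
  convert σ.injective using 1
  funext ⟨i, b⟩
  cases b <;> simp [hrepc]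

theorem exists_minEdge_eq (hk : 0 < k) (M : CSM k P color) :
    ∃ i, M.minEdge hk = dist (M.e i).1 (M.e i).2 := by
  obtain ⟨i, -, hi⟩ := Finset.univ.exists_mem_eq_inf' ⟨⟨0, hk⟩, Finset.mem_univ _⟩
    fun i => dist (M.e i).1 (M.e i).2
  exact ⟨i, hi⟩

theorem minEdge_le_minEdge (hk : 0 < k) {M M' : CSM k P color}
    (h : ∀ i, dist (M.e i).1 (M.e i).2 ≤ dist (M'.e i).1 (M'.e i).2) :
    M.minEdge hk ≤ M'.minEdge hk :=
  Finset.le_inf' _ _ fun i _ => (Finset.inf'_le _ (Finset.mem_univ i)).trans (h i)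

theorem exists_farthest_pairs (M : CSM k P color) :
    ∃ M' : CSM k P color, (∀ i, dist (M.e i).1 (M.e i).2 ≤ dist (M'.e i).1 (M'.e i).2) ∧
      ∀ i, IsFarthestPairOfColors P color (M'.e i).1 (M'.e i).2 := by
  choose p hp q hq hpc hqc hfar using
    fun i => exists_isFarthestPairOfColors color (M.mem1 i) (M.mem2 i)
  refine ⟨⟨fun i => (p i, q i), hp, hq, ?_⟩, fun i => ?_, hfar⟩
  · convert M.colorInj using 1
    funext ⟨i, b⟩
    cases b <;> simp [hpc, hqc]
  · exact hfar i _ (M.mem1 i) _ (M.mem2 i) (hpc i).symm (hqc i).symm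

end CSM

/-- There is a MaxMin-optimal color-spanning matching whose minimum-length edge
realizes the bichromatic farthest-pair distance between its endpoint colors. -/
theorem maxmin_min_edge_is_bichromatic_farthest_pair
    (k : ℕ) (hk : 0 < k) (P : Finset Pt) (color : Pt → Fin (2*k))
    (hsurj : ∀ c : Fin (2*k), ∃ p ∈ P, color p = c) :
    ∃ M : CSM k P color,
      (∀ M' : CSM k P color, M'.minEdge hk ≤ M.minEdge hk) ∧
      ∃ i : Fin k,
        M.minEdge hk = dist (M.e i).1 (M.e i).2 ∧
        ∀ p ∈ P, ∀ q ∈ P,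
          color p = color (M.e i).1 → color q = color (M.e i).2 →
          dist p q ≤ dist (M.e i).1 (M.e i).2 := by
  have := CSM.nonempty_of_forall_exists_color hsurj
  obtain ⟨M₀, hM₀⟩ := Finite.exists_max fun M : CSM k P color => M.minEdge hk
  obtain ⟨M, hlonger, hfar⟩ := M₀.exists_farthest_pairs
  obtain ⟨i, hi⟩ := M.exists_minEdge_eq hk
  exact ⟨M, fun M' => (hM₀ M').trans (CSM.minEdge_le_minEdge hk hlonger), i, hi, hfar i⟩

end
end

section
/- Let G = (V, E) be an undirected graph with a vertex coloring color : V → Fin (2k). Define the color graph G₁ on vertex set Fin (2k) with an edge {i, j} (i ≠ j) whenever there exist p, q ∈ V with {p, q} ∈ E, color(p) = i, and color(q) = j. Then G has a set of k pairwise vertex-disjoint edges whose 2k endpoints have pairwise distinct colors (covering all 2k colors) if and only if G₁ has a perfect matching. -/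
/-- The color graph `G₁` on the `2*k` colors: colors `i ≠ j` are adjacent iff
some edge of `G` joins a vertex of color `i` to a vertex of color `j`. -/
def colorGraph {V : Type*} (k : ℕ) (G : SimpleGraph V) (color : V → Fin (2*k)) :
    SimpleGraph (Fin (2*k)) :=
  SimpleGraph.fromRel fun i j => ∃ p q, G.Adj p q ∧ color p = i ∧ color q = j

/-! Coloring both endpoints of each edge sends a multicolored matching to a perfect matching of
the color graph. Conversely, each edge of the color graph lifts to an edge of `G` with the same end
colors, and the endpoint colors of the lifted family are the injective family we started from. -/

theorem colorGraph_adj {V : Type*} {k : ℕ} {G : SimpleGraph V} {color : V → Fin (2*k)}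
    {i j : Fin (2*k)} :
    (colorGraph k G color).Adj i j ↔ i ≠ j ∧ ∃ p q, G.Adj p q ∧ color p = i ∧ color q = j := by
  rw [colorGraph, SimpleGraph.fromRel_adj]
  exact and_congr_right fun _ =>
    or_iff_left_of_imp fun ⟨p, q, h, hp, hq⟩ => ⟨q, p, h.symm, hq, hp⟩

section Endpoints

variable {ι α β : Type*}

def endpoints (e : ι → α × α) (x : ι × Bool) : α :=
  if x.2 then (e x.1).1 else (e x.1).2

theorem endpoints_map (g : α → β) (e : ι → α × α) :
    endpoints (Prod.map g g ∘ e) = g ∘ endpoints e := by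
  funext ⟨i, b⟩
  cases b <;> rfl

theorem fst_ne_snd_of_injective_endpoints {e : ι → α × α}
    (h : Function.Injective (endpoints e)) (i : ι) : (e i).1 ≠ (e i).2 := fun heq =>
  Bool.noConfusion (congrArg Prod.snd (h (a₁ := (i, true)) (a₂ := (i, false)) heq))

end Endpoints

/-- `G` has `k` pairwise vertex-disjoint edges whose `2*k` endpoints have pairwise
distinct colors (covering all colors) iff the color graph `G₁` has a perfect
matching (encoded as `k` edges of `G₁` whose endpoints enumerate all `2*k`
colors without repetition). -/
theorem multicoloredMatching_iff_colorGraph_perfectMatching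
    {V : Type*} (k : ℕ) (G : SimpleGraph V) (color : V → Fin (2*k)) :
    (∃ e : Fin k → V × V,
        (∀ i, G.Adj (e i).1 (e i).2) ∧
        Function.Injective (fun x : Fin k × Bool =>
          color (if x.2 then (e x.1).1 else (e x.1).2))) ↔
    (∃ f : Fin k → Fin (2*k) × Fin (2*k),
        (∀ i, (colorGraph k G color).Adj (f i).1 (f i).2) ∧
        Function.Injective (fun x : Fin k × Bool =>
          if x.2 then (f x.1).1 else (f x.1).2)) := by
  constructor
  · rintro ⟨e, hadj, hinj⟩
    have hinj' : Function.Injective (endpoints (Prod.map color color ∘ e)) := by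
      rw [endpoints_map]
      exact hinj
    refine ⟨Prod.map color color ∘ e, fun i => ?_, hinj'⟩
    exact colorGraph_adj.2
      ⟨fst_ne_snd_of_injective_endpoints hinj' i, _, _, hadj i, rfl, rfl⟩
  · rintro ⟨f, hadj, hinj⟩
    choose p q hpq hp hq using fun i => (colorGraph_adj.1 (hadj i)).2
    have hf : Prod.map color color ∘ (fun i => (p i, q i)) = f :=
      funext fun i => Prod.ext (hp i) (hq i)
    refine ⟨fun i => (p i, q i), hpq, ?_⟩
    change Function.Injective (color ∘ endpoints fun i => (p i, q i))
    rwa [← endpoints_map, hf]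
end

section
/- Let G = (V, E) be an undirected graph with edge weights w : E → ℝ, vertices colored by color : V → Fin (2k). Define the weighted color graph G₁ on Fin (2k) where edge {i,j} exists iff some edge of G joins a vertex of color i to a vertex of color j, with weight equal to the minimum weight of such an edge of G. Then the minimum total weight over all k-multicolored matchings in G equals the minimum total weight over all perfect matchings of G₁ (whenever either exists). -/
/-!
Replacing every edge of a multicolored matching by its pair of colors gives a perfect matching
of the color graph of no larger weight. Conversely, since `V` is finite the minimum defining
`colorWeight` is attained, so each edge of a perfect matching of the color graph lifts to an
edge of `G` of exactly its weight, and these lifts form a multicolored matching. Hence each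
weight set dominates the other from below, and the infima agree (both are `sInf ∅` when no
matching exists).
-/

noncomputable section

/-- A `k`-multicolored matching in `G`: `k` edges whose `2*k` endpoints have
pairwise distinct colors (hence are pairwise distinct, covering all colors). -/
def IsMCM {V : Type*} {k : ℕ} (G : SimpleGraph V) (color : V → Fin (2*k))
    (e : Fin k → V × V) : Prop :=
  (∀ i, G.Adj (e i).1 (e i).2) ∧
  Function.Injective (fun x : Fin k × Bool =>
    color (if x.2 then (e x.1).1 else (e x.1).2))

/-- The weight of an edge `{i,j}` of the color graph `G₁`: the minimum weight of
an edge of `G` joining a vertex of color `i` to a vertex of color `j`. -/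
def colorWeight {V : Type*} {k : ℕ} (G : SimpleGraph V) (color : V → Fin (2*k))
    (w : V → V → ℝ) (i j : Fin (2*k)) : ℝ :=
  sInf {r : ℝ | ∃ p q, G.Adj p q ∧ color p = i ∧ color q = j ∧ w p q = r}

/-- A perfect matching of the color graph `G₁`: `k` edges of `G₁` whose
endpoints enumerate all `2*k` colors without repetition. -/
def IsColorPM {V : Type*} {k : ℕ} (G : SimpleGraph V) (color : V → Fin (2*k))
    (f : Fin k → Fin (2*k) × Fin (2*k)) : Prop :=
  (∀ i, ∃ p q, G.Adj p q ∧ color p = (f i).1 ∧ color q = (f i).2) ∧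
  Function.Injective (fun x : Fin k × Bool =>
    if x.2 then (f x.1).1 else (f x.1).2)

section

variable {V : Type*} {k : ℕ} {G : SimpleGraph V} {color : V → Fin (2*k)}

theorem finite_colorWeight_candidates [Finite V] (w : V → V → ℝ) (i j : Fin (2*k)) :
    {r : ℝ | ∃ p q, G.Adj p q ∧ color p = i ∧ color q = j ∧ w p q = r}.Finite :=
  (Set.finite_range fun pq : V × V => w pq.1 pq.2).subset
    (by rintro r ⟨p, q, -, -, -, rfl⟩; exact Set.mem_range_self (p, q))

theorem colorWeight_le [Finite V] (w : V → V → ℝ) {p q : V} (h : G.Adj p q) :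
    colorWeight G color w (color p) (color q) ≤ w p q :=
  csInf_le (finite_colorWeight_candidates w _ _).bddBelow ⟨p, q, h, rfl, rfl, rfl⟩

theorem exists_adj_weight_eq_colorWeight [Finite V] (w : V → V → ℝ) {i j : Fin (2*k)}
    (h : ∃ p q, G.Adj p q ∧ color p = i ∧ color q = j) :
    ∃ p q, G.Adj p q ∧ color p = i ∧ color q = j ∧ w p q = colorWeight G color w i j := by
  obtain ⟨p, q, hpq, hp, hq⟩ := h
  refine Set.Nonempty.csInf_mem ?_ (finite_colorWeight_candidates w i j)
  exact ⟨w p q, p, q, hpq, hp, hq, rfl⟩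

theorem IsMCM.isColorPM {e : Fin k → V × V} (he : IsMCM G color e) :
    IsColorPM G color fun i => (color (e i).1, color (e i).2) := by
  refine ⟨fun i => ⟨(e i).1, (e i).2, he.1 i, rfl, rfl⟩, ?_⟩
  convert he.2 using 2 with x
  exact (apply_ite color _ _ _).symm

theorem IsColorPM.exists_isMCM [Finite V] (w : V → V → ℝ) {f : Fin k → Fin (2*k) × Fin (2*k)}
    (hf : IsColorPM G color f) :
    ∃ e : Fin k → V × V, IsMCM G color e ∧
      ∑ i, w (e i).1 (e i).2 = ∑ i, colorWeight G color w (f i).1 (f i).2 := by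
  have h i : ∃ pq : V × V, G.Adj pq.1 pq.2 ∧ color pq.1 = (f i).1 ∧ color pq.2 = (f i).2 ∧
      w pq.1 pq.2 = colorWeight G color w (f i).1 (f i).2 := by
    obtain ⟨p, q, h⟩ := exists_adj_weight_eq_colorWeight w (hf.1 i)
    exact ⟨(p, q), h⟩
  choose e he_adj he_fst he_snd he_weight using h
  refine ⟨e, ⟨he_adj, ?_⟩, Finset.sum_congr rfl fun i _ => he_weight i⟩
  convert hf.2 using 2 with x
  rw [apply_ite color, he_fst, he_snd]

end

theorem minWeight_multicoloredMatching_eq_minWeight_colorPM_general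
    {V : Type*} [Fintype V] (k : ℕ) (G : SimpleGraph V) (color : V → Fin (2*k))
    (w : V → V → ℝ) :
    sInf {W : ℝ | ∃ e : Fin k → V × V, IsMCM G color e ∧
        W = ∑ i, w (e i).1 (e i).2} =
    sInf {W : ℝ | ∃ f : Fin k → Fin (2*k) × Fin (2*k), IsColorPM G color f ∧
        W = ∑ i, colorWeight G color w (f i).1 (f i).2} := by
  apply csInf_eq_csInf_of_forall_exists_le
  · rintro _ ⟨e, he, rfl⟩
    exact ⟨_, ⟨_, he.isColorPM, rfl⟩,
      Finset.sum_le_sum fun i _ => colorWeight_le w (he.1 i)⟩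
  · rintro _ ⟨f, hf, rfl⟩
    obtain ⟨e, he, hsum⟩ := hf.exists_isMCM w
    exact ⟨_, ⟨e, he, rfl⟩, hsum.le⟩

/-- The minimum total weight over all `k`-multicolored matchings of `G` equals
the minimum total weight over all perfect matchings of the weighted color graph
`G₁`, provided a multicolored matching exists. -/
theorem minWeight_multicoloredMatching_eq_minWeight_colorPM
    {V : Type*} [Fintype V] (k : ℕ) (G : SimpleGraph V) (color : V → Fin (2*k))
    (w : V → V → ℝ) (hw : ∀ p q, w p q = w q p)
    (hex : ∃ e : Fin k → V × V, IsMCM G color e) :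
    sInf {W : ℝ | ∃ e : Fin k → V × V, IsMCM G color e ∧
        W = ∑ i, w (e i).1 (e i).2} =
    sInf {W : ℝ | ∃ f : Fin k → Fin (2*k) × Fin (2*k), IsColorPM G color f ∧
        W = ∑ i, colorWeight G color w (f i).1 (f i).2} :=
  minWeight_multicoloredMatching_eq_minWeight_colorPM_general k G color w

end
end

section
/- Let G = (V, E) be a finite simple graph whose vertices are colored with colors 1,…,k, with every color used. Construct G' on vertex set V ∪ U where U = {u₁,…,u_k}, uᵢ has color k+i, the edges of G' are E together with E' = { {uᵢ, v} : v ∈ V, color(v) = i }. Then G has a colorful independent set of size k (one vertex per color among 1..k) if and only if G' has a colorful independent matching of size k, i.e., a set of k edges whose 2k endpoints have pairwise distinct colors (covering all 2k colors) and such that for any two distinct edges {x₁,x₂}, {y₁,y₂} in the set, no pair {xᵢ, yⱼ} is an edge of G'. -/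
/-- The graph `G' = (V ∪ U, E ∪ E')`: vertices are `V ⊕ Fin k` where `Sum.inr i`
is the new vertex `uᵢ`; edges are the edges of `G` together with
`E' = { {uᵢ, v} : v ∈ V, color v = i }`. -/
def hardGraph {V : Type*} (G : SimpleGraph V) {k : ℕ} (color : V → Fin k) :
    SimpleGraph (V ⊕ Fin k) :=
  SimpleGraph.fromRel fun x y =>
    (∃ u v, x = Sum.inl u ∧ y = Sum.inl v ∧ G.Adj u v) ∨
    (∃ i v, x = Sum.inr i ∧ y = Sum.inl v ∧ color v = i)

/-- The coloring of `G'` with `2*k` colors (modeled as `Fin k ⊕ Fin k`):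
a vertex `v ∈ V` keeps its color `color v` (as `Sum.inl (color v)`), and the
new vertex `uᵢ` gets the new color `k + i` (as `Sum.inr i`). -/
def hardColor {V : Type*} {k : ℕ} (color : V → Fin k) :
    V ⊕ Fin k → Fin k ⊕ Fin k :=
  Sum.map color id

/-- A colorful independent matching of size `k` in `G'`: `k` edges of `G'` whose
`2*k` endpoints have pairwise distinct colors (hence cover all `2*k` colors),
such that no edge of `G'` joins endpoints of two distinct matching edges. -/
def IsCIM {V : Type*} (G : SimpleGraph V) {k : ℕ} (color : V → Fin k)
    (e : Fin k → (V ⊕ Fin k) × (V ⊕ Fin k)) : Prop :=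
  (∀ i, (hardGraph G color).Adj (e i).1 (e i).2) ∧
  Function.Injective (fun x : Fin k × Bool =>
    hardColor color (if x.2 then (e x.1).1 else (e x.1).2)) ∧
  (∀ i j : Fin k, i ≠ j → ∀ a b : Bool,
    ¬ (hardGraph G color).Adj (if a then (e i).1 else (e i).2)
        (if b then (e j).1 else (e j).2))

/-!
Given a colorful independent set `g`, the edges `{uᵢ, g i}` form a colorful independent
matching. Conversely, the `2k` endpoints of a colorful independent matching realise all `2k`
colors, so every `uⱼ` is an endpoint; its partner is a vertex of `V` of color `j`. Two such
partners lie on distinct matching edges, because `G'` has no edge `{uⱼ, uⱼ'}`, hence they are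
non-adjacent.
-/

open Function

def edgeEndpoint {ι α : Type*} (e : ι → α × α) (x : ι × Bool) : α :=
  if x.2 then (e x.1).1 else (e x.1).2

theorem SimpleGraph.adj_edgeEndpoint_not {ι α : Type*} {H : SimpleGraph α} {e : ι → α × α}
    (he : ∀ i, H.Adj (e i).1 (e i).2) (x : ι × Bool) :
    H.Adj (edgeEndpoint e x) (edgeEndpoint e (x.1, !x.2)) := by
  obtain ⟨i, _ | _⟩ := x
  · exact (he i).symm
  · exact he i

theorem Prod.eq_not_snd_of_fst_eq {ι : Type*} {x y : ι × Bool} (h₁ : x.1 = y.1) (hne : x ≠ y) :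
    y = (x.1, !x.2) := by
  obtain ⟨i, a⟩ := x
  obtain ⟨j, b⟩ := y
  cases a <;> cases b <;> simp_all

section hardGraph

variable {V : Type*} {G : SimpleGraph V} {k : ℕ} {color : V → Fin k}

@[simp] theorem hardGraph_adj_inl_inl {u v : V} :
    (hardGraph G color).Adj (.inl u) (.inl v) ↔ G.Adj u v := by
  simpa [hardGraph, G.adj_comm v u] using G.ne_of_adj

@[simp] theorem hardGraph_adj_inr_inl {i : Fin k} {v : V} :
    (hardGraph G color).Adj (.inr i) (.inl v) ↔ color v = i := by
  simp [hardGraph, eq_comm]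

@[simp] theorem hardGraph_adj_inl_inr {i : Fin k} {v : V} :
    (hardGraph G color).Adj (.inl v) (.inr i) ↔ color v = i := by
  simp [hardGraph, eq_comm]

@[simp] theorem not_hardGraph_adj_inr_inr {i j : Fin k} :
    ¬ (hardGraph G color).Adj (.inr i) (.inr j) := by
  simp [hardGraph]

theorem exists_inl_of_hardGraph_adj_inr {j : Fin k} {w : V ⊕ Fin k}
    (h : (hardGraph G color).Adj (.inr j) w) : ∃ v, w = .inl v ∧ color v = j := by
  cases w <;> simp_all

@[simp] theorem hardColor_eq_inr_iff {x : V ⊕ Fin k} {j : Fin k} :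
    hardColor color x = .inr j ↔ x = .inr j := by
  cases x <;> simp [hardColor]

theorem isCIM_of_colorful_independent {g : Fin k → V} (hg : ∀ i, color (g i) = i)
    (hind : ∀ i j, i ≠ j → ¬ G.Adj (g i) (g j)) :
    IsCIM G color fun i => (.inr i, .inl (g i)) := by
  refine ⟨fun i => by simp [hg], ?_, ?_⟩
  · rintro ⟨i, _ | _⟩ ⟨j, _ | _⟩ h <;> simp_all [hardColor]
  · intro i j hij a b
    cases a <;> cases b <;> simp [hg, hij, Ne.symm hij, hind i j hij]

variable {e : Fin k → (V ⊕ Fin k) × (V ⊕ Fin k)}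

theorem IsCIM.bijective_hardColor_comp_edgeEndpoint (h : IsCIM G color e) :
    Bijective (hardColor color ∘ edgeEndpoint e) :=
  (Fintype.bijective_iff_injective_and_card _).2 ⟨h.2.1, by simp; ring⟩

theorem IsCIM.exists_colorful_independent (h : IsCIM G color e) :
    ∃ g : Fin k → V, (∀ i, color (g i) = i) ∧ ∀ i j, i ≠ j → ¬ G.Adj (g i) (g j) := by
  choose x hx using fun j => h.bijective_hardColor_comp_edgeEndpoint.2 (.inr j)
  have hxU (j : Fin k) : edgeEndpoint e (x j) = .inr j := hardColor_eq_inr_iff.1 (hx j)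
  have hpartner (j : Fin k) :
      ∃ v, edgeEndpoint e ((x j).1, !(x j).2) = .inl v ∧ color v = j :=
    exists_inl_of_hardGraph_adj_inr (hxU j ▸ SimpleGraph.adj_edgeEndpoint_not h.1 (x j))
  choose g hg hcolor using hpartner
  have hedge : Injective fun j => (x j).1 := by
    intro j j' hjj'
    by_contra hne
    have hxne : x j ≠ x j' := fun hxx =>
      hne (Sum.inr_injective ((hxU j).symm.trans (hxx ▸ hxU j')))
    have hpartner_j := hg j
    rw [← Prod.eq_not_snd_of_fst_eq hjj' hxne, hxU j'] at hpartner_j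
    exact Sum.inr_ne_inl hpartner_j
  refine ⟨g, hcolor, fun j j' hne hadj => h.2.2 _ _ (hedge.ne hne) (!(x j).2) (!(x j').2) ?_⟩
  change (hardGraph G color).Adj (edgeEndpoint e ((x j).1, !(x j).2))
    (edgeEndpoint e ((x j').1, !(x j').2))
  rw [hg, hg]
  exact hardGraph_adj_inl_inl.2 hadj

end hardGraph

theorem colorfulIS_iff_colorfulIndependentMatching_general
    {V : Type*} (G : SimpleGraph V) (k : ℕ) (color : V → Fin k) :
    (∃ g : Fin k → V, (∀ i, color (g i) = i) ∧
        ∀ i j : Fin k, i ≠ j → ¬ G.Adj (g i) (g j)) ↔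
    (∃ e : Fin k → (V ⊕ Fin k) × (V ⊕ Fin k), IsCIM G color e) :=
  ⟨fun ⟨_, hg, hind⟩ => ⟨_, isCIM_of_colorful_independent hg hind⟩,
    fun ⟨_, he⟩ => he.exists_colorful_independent⟩

/-- `G` has a colorful independent set of size `k` (one vertex per color) iff
`G'` has a colorful independent matching of size `k`. -/
theorem colorfulIS_iff_colorfulIndependentMatching
    {V : Type*} (G : SimpleGraph V) (k : ℕ) (color : V → Fin k)
    (hsurj : Function.Surjective color) :
    (∃ g : Fin k → V, (∀ i, color (g i) = i) ∧
        ∀ i j : Fin k, i ≠ j → ¬ G.Adj (g i) (g j)) ↔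
    (∃ e : Fin k → (V ⊕ Fin k) × (V ⊕ Fin k), IsCIM G color e) :=
  colorfulIS_iff_colorfulIndependentMatching_general G k color
end

section
/- Let G' = (V ∪ U, E ∪ E') be as above, and suppose M is a colorful independent matching of size k in G'. Then the set of V-endpoints of the edges in M is an independent set in G of size k with pairwise distinct colors. -/
namespace hardGraph

variable {V : Type*} {G : SimpleGraph V} {k : ℕ} {color : V → Fin k}

theorem adj_inl_inl {u v : V} :
    (hardGraph G color).Adj (Sum.inl u) (Sum.inl v) ↔ G.Adj u v := by
  rw [hardGraph, SimpleGraph.fromRel_adj]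
  refine ⟨?_, fun h => ⟨by simpa using G.ne_of_adj h, .inl (.inl ⟨u, v, rfl, rfl, h⟩)⟩⟩
  rintro ⟨-, (⟨_, _, ⟨⟩, ⟨⟩, h⟩ | ⟨_, _, ⟨⟩, -, -⟩) | (⟨_, _, ⟨⟩, ⟨⟩, h⟩ | ⟨_, _, ⟨⟩, -, -⟩)⟩
  exacts [h, h.symm]

/-- The new vertices `uᵢ` are pairwise non-adjacent, so every edge of `G'` has an endpoint in `V`. -/
theorem exists_inl_of_adj {x y : V ⊕ Fin k} (h : (hardGraph G color).Adj x y) :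
    ∃ (a : Bool) (v : V), (if a then x else y) = Sum.inl v := by
  obtain ⟨-, (⟨u, -, rfl, -, -⟩ | ⟨-, v, -, rfl, -⟩) | (⟨-, u, -, rfl, -⟩ | ⟨-, u, -, rfl, -⟩)⟩ := h
  exacts [⟨true, u, rfl⟩, ⟨false, v, rfl⟩, ⟨true, u, rfl⟩, ⟨true, u, rfl⟩]

end hardGraph

theorem colorfulIndependentMatching_gives_colorfulIS_general
    {V : Type*} (G : SimpleGraph V) (k : ℕ) (color : V → Fin k)
    (e : Fin k → (V ⊕ Fin k) × (V ⊕ Fin k)) (he : IsCIM G color e) :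
    ∃ g : Fin k → V, Function.Injective g ∧
      (∀ i, (e i).1 = Sum.inl (g i) ∨ (e i).2 = Sum.inl (g i)) ∧
      (∀ i j : Fin k, i ≠ j →
        color (g i) ≠ color (g j) ∧ ¬ G.Adj (g i) (g j)) := by
  obtain ⟨hadj, hinj, hind⟩ := he
  choose a g hg using fun i => hardGraph.exists_inl_of_adj (hadj i)
  have hcolor : ∀ i j, color (g i) = color (g j) → i = j := fun i j h =>
    congrArg Prod.fst (@hinj (i, a i) (j, a j) (by simp only [hg, hardColor, Sum.map_inl, h]))
  refine ⟨g, fun i j h => hcolor i j (congrArg color h), fun i => ?_, fun i j hij =>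
    ⟨mt (hcolor i j) hij, fun hG => hind i j hij (a i) (a j) ?_⟩⟩
  · have hgi := hg i
    split_ifs at hgi
    exacts [.inl hgi, .inr hgi]
  · rw [hg i, hg j]
    exact hardGraph.adj_inl_inl.2 hG

/-- The `V`-endpoints of a colorful independent matching of size `k` in `G'`
form an independent set of `G` of size `k` with pairwise distinct colors. -/
theorem colorfulIndependentMatching_gives_colorfulIS
    {V : Type*} (G : SimpleGraph V) (k : ℕ) (color : V → Fin k)
    (hsurj : Function.Surjective color)
    (e : Fin k → (V ⊕ Fin k) × (V ⊕ Fin k)) (he : IsCIM G color e) :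
    ∃ g : Fin k → V, Function.Injective g ∧
      (∀ i, (e i).1 = Sum.inl (g i) ∨ (e i).2 = Sum.inl (g i)) ∧
      (∀ i j : Fin k, i ≠ j →
        color (g i) ≠ color (g j) ∧ ¬ G.Adj (g i) (g j)) :=
  colorfulIndependentMatching_gives_colorfulIS_general G k color e he
end
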